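/- arXiv:1206.5899 — 2 statements merged into one kernel-verified Lean document; each statement's English description precedes it below -/
import Mathlib

section
/- Let V be a vector space over a field F and let L0(n), L1(n) (n ∈ ℕ) be two families of linear operators on V (not assumed to commute in any way). Suppose the sequence (Y_n) in V satisfies the second-order operator difference equation Y_{n+2} = L0(n) Y_n + L1(n) Y_{n+1} for all n ≥ 0, with initial conditions Y_0 = 0 and Y_1 = B. Then for every n ≥ 1, Y_n = Σ_{t=0}^{⌊(n−1)/2⌋} {L0^(t) L1^(n−1−2t)}_1 B, where {L0^(u) L1^(v)}_1 is the ordered permutation operator defined in the context (with q = 1, so k_1 = 2u + v − 1). -/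
/-!
Read `[L0^{τ_1} L1^{s_1} ⋯ L0^{τ_r} L1^{s_r}]_q` letter by letter: starting from the level
`k_q`, each letter is evaluated at the current level, and `L0` then lowers the level by 2, `L1`
by 1.
Sorting the tuples of `S^r_{u,v}` by their first letter gives the Pascal-type recursion
`{L0^(u) L1^(v)}_q = L0(2u+v-q) {L0^(u-1) L1^(v)}_q + L1(2u+v-q) {L0^(u) L1^(v-1)}_q`:
a leading `L0` is removed by decrementing `τ_1`, a leading `L1` by decrementing `s_1` or, when the
first block is `(τ_1, s_1) = (0, 1)`, by dropping that block, which lowers `r` by one.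
Summed along the diagonal `2t + v = n`, the recursion says that `Σ_t {L0^(t) L1^(n-2t)}_1 B`
obeys the same second-order recursion and has the same initial values as `Y_{n+1}`.
-/

/-- The set `S^r_{u,v}` of pairs of `r`-tuples of nonnegative integers
`(τ_1,…,τ_r)`, `(s_1,…,s_r)` with `Σ τ_i = u`, `Σ s_i = v`, where for `r = 1`
there is no further constraint, and for `r ≥ 2` one requires `s_1 ≥ 1`,
`τ_r ≥ 1`, and `τ_i ≥ 1`, `s_i ≥ 1` for all `2 ≤ i ≤ r − 1`. -/
def Sset (r u v : ℕ) : Set ((Fin r → ℕ) × (Fin r → ℕ)) :=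
  {p | (∑ i, p.1 i) = u ∧ (∑ i, p.2 i) = v ∧
    (2 ≤ r → ∀ i : Fin r,
      ((i : ℕ) = 0 → 1 ≤ p.2 i) ∧
      ((i : ℕ) = r - 1 → 1 ≤ p.1 i) ∧
      (1 ≤ (i : ℕ) → (i : ℕ) ≤ r - 2 → 1 ≤ p.1 i ∧ 1 ≤ p.2 i))}

/-- The ordered operator `[L0^{τ_1} L1^{s_1} ⋯ L0^{τ_r} L1^{s_r}]_q` with
`k_q = 2u + v − q`:  the composition (written left to right, i.e. as a product
in `Module.End`) over `j = 1,…,r` of the block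
`L0(k_q − 2T_{j−1} − S_{j−1}) ⋯ L0(k_q − 2T_{j−1} − S_{j−1} − 2(τ_j − 1))`
followed by
`L1(k_q − 2T_j − S_{j−1}) ⋯ L1(k_q − 2T_j − S_{j−1} − (s_j − 1))`,
where `T_j = τ_1 + ⋯ + τ_j` and `S_j = s_1 + ⋯ + s_j`. -/
def orderedOp {F V : Type*} [Field F] [AddCommGroup V] [Module F V]
    (L0 L1 : ℕ → Module.End F V) (q u v r : ℕ) (τ s : Fin r → ℕ) :
    Module.End F V :=
  letI k : ℕ := 2 * u + v - q
  letI τ' : ℕ → ℕ := fun i => if h : i < r then τ ⟨i, h⟩ else 0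
  letI s' : ℕ → ℕ := fun i => if h : i < r then s ⟨i, h⟩ else 0
  letI T : ℕ → ℕ := fun j => ∑ i ∈ Finset.range j, τ' i
  letI S : ℕ → ℕ := fun j => ∑ i ∈ Finset.range j, s' i
  ((List.range r).map (fun j =>
    (((List.range (τ' j)).map (fun a => L0 (k - 2 * T j - S j - 2 * a))).prod) *
    (((List.range (s' j)).map (fun b => L1 (k - 2 * T (j + 1) - S j - b))).prod))).prod

/-- The ordered permutation operator
`{L0^(u) L1^(v)}_q = Σ_{r=1}^{min(u,v)+1} Σ_{((τ),(s)) ∈ S^r_{u,v}}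
[L0^{τ_1} L1^{s_1} ⋯ L0^{τ_r} L1^{s_r}]_q`. -/
noncomputable def curly {F V : Type*} [Field F] [AddCommGroup V] [Module F V]
    (L0 L1 : ℕ → Module.End F V) (q u v : ℕ) : Module.End F V :=
  ∑ r ∈ Finset.Icc 1 (min u v + 1),
    ∑ᶠ p ∈ Sset r u v, orderedOp L0 L1 q u v r p.1 p.2

section Blocks

variable {M : Type*} [Monoid M] (L0 L1 : ℕ → M)

def blocksOp : ℕ → List (ℕ × ℕ) → M
  | _, [] => 1
  | c, (0, 0) :: l => blocksOp c l
  | c, (0, s + 1) :: l => L1 c * blocksOp (c - 1) ((0, s) :: l)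
  | c, (t + 1, s) :: l => L0 c * blocksOp (c - 2) ((t, s) :: l)

theorem blocksOp_cons (c t s : ℕ) (l : List (ℕ × ℕ)) :
    blocksOp L0 L1 c ((t, s) :: l) =
      ((List.range t).map fun a => L0 (c - 2 * a)).prod *
        ((List.range s).map fun b => L1 (c - 2 * t - b)).prod *
          blocksOp L0 L1 (c - 2 * t - s) l := by
  induction t generalizing c with
  | zero =>
    induction s generalizing c with
    | zero => simp [blocksOp]
    | succ s ih =>
      simp only [blocksOp, ih, List.range_succ_eq_map, List.map_cons, List.map_map,
        List.prod_cons, Function.comp_def, Nat.sub_sub, List.range_zero, List.map_nil,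
        List.prod_nil, one_mul, mul_assoc, Nat.mul_zero, Nat.sub_zero, Nat.add_comm 1]
  | succ t ih =>
    simp only [blocksOp, ih, List.range_succ_eq_map, List.map_cons, List.map_map,
      List.prod_cons, Function.comp_def, Nat.sub_sub, mul_assoc, Nat.mul_zero, Nat.sub_zero,
      Nat.mul_succ, Nat.add_comm 2]

open Finset in
theorem prod_blocks_eq_blocksOp (r : ℕ) (τ s : ℕ → ℕ) (c : ℕ) :
    ((List.range r).map fun j =>
      ((List.range (τ j)).map fun a =>
        L0 (c - 2 * ∑ i ∈ range j, τ i - ∑ i ∈ range j, s i - 2 * a)).prod *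
      ((List.range (s j)).map fun b =>
        L1 (c - 2 * ∑ i ∈ range (j + 1), τ i - ∑ i ∈ range j, s i - b)).prod).prod =
      blocksOp L0 L1 c ((List.range r).map fun j => (τ j, s j)) := by
  induction r generalizing τ s c with
  | zero => simp [blocksOp]
  | succ r ih =>
    rw [List.range_succ_eq_map, List.map_cons, List.map_cons, List.map_map, List.map_map,
      List.prod_cons, blocksOp_cons, ← ih, mul_assoc]
    simp only [Function.comp_def, Finset.sum_range_succ', Finset.sum_range_zero, Nat.sub_sub,
      mul_add, Nat.mul_zero, Nat.zero_add, Nat.add_zero, Nat.succ_eq_add_one, mul_assoc]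
    refine congrArg _ (congrArg _ (congrArg _ (List.map_congr_left fun j _ => ?_)))
    congr 3 <;> funext x <;> congr 1 <;> omega

end Blocks

/-- The conditions of `Sset`, uniformly in `r`: every `τ_i` but the first and every `s_i` but the
last is positive. -/
def blockTuples (r u v : ℕ) : Finset ((Fin r → ℕ) × (Fin r → ℕ)) :=
  (Finset.Nat.antidiagonalTuple r u ×ˢ Finset.Nat.antidiagonalTuple r v).filter fun p =>
    ∀ i : Fin r, ((i : ℕ) ≠ 0 → 1 ≤ p.1 i) ∧ ((i : ℕ) + 1 ≠ r → 1 ≤ p.2 i)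

theorem mem_blockTuples {r u v : ℕ} {p : (Fin r → ℕ) × (Fin r → ℕ)} :
    p ∈ blockTuples r u v ↔ ∑ i, p.1 i = u ∧ ∑ i, p.2 i = v ∧
      ∀ i : Fin r,
        ((i : ℕ) ≠ 0 → 1 ≤ p.1 i) ∧ ((i : ℕ) + 1 ≠ r → 1 ≤ p.2 i) := by
  simp [blockTuples, Finset.Nat.mem_antidiagonalTuple, and_assoc]

theorem mem_blockTuples_succ {r u v : ℕ} {p : (Fin (r + 1) → ℕ) × (Fin (r + 1) → ℕ)} :
    p ∈ blockTuples (r + 1) u v ↔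
      p.1 0 + ∑ j : Fin r, p.1 j.succ = u ∧ p.2 0 + ∑ j : Fin r, p.2 j.succ = v ∧
      (r ≠ 0 → 1 ≤ p.2 0) ∧
      ∀ j : Fin r, 1 ≤ p.1 j.succ ∧ ((j : ℕ) + 1 ≠ r → 1 ≤ p.2 j.succ) := by
  simp [mem_blockTuples, Fin.sum_univ_succ, Fin.forall_fin_succ, eq_comm (a := 0)]

theorem coe_blockTuples (r u v : ℕ) : (blockTuples r u v : Set _) = Sset r u v := by
  ext p
  simp only [Finset.mem_coe, mem_blockTuples, Sset, Set.mem_ofPred_eq]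
  refine and_congr_right fun _ => and_congr_right fun _ => ⟨fun h hr i => ?_, fun h i => ?_⟩
  · exact ⟨fun h0 => (h i).2 (by omega), fun hl => (h i).1 (by omega),
      fun h1 h2 => ⟨(h i).1 (by omega), (h i).2 (by omega)⟩⟩
  · have := i.isLt
    by_cases hr : 2 ≤ r
    · obtain ⟨h0, hl, hmid⟩ := h hr i
      refine ⟨fun hi => ?_, fun hi => ?_⟩
      · by_cases hil : (i : ℕ) = r - 1
        · exact hl hil
        · exact (hmid (by omega) (by omega)).1
      · by_cases hi0 : (i : ℕ) = 0
        · exact h0 hi0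
        · exact (hmid (by omega) (by omega)).2
    · exact ⟨fun _ => by omega, fun _ => by omega⟩


def blocks {r : ℕ} (p : (Fin r → ℕ) × (Fin r → ℕ)) : List (ℕ × ℕ) :=
  List.ofFn fun i => (p.1 i, p.2 i)

theorem blocks_succ {r : ℕ} (p : (Fin (r + 1) → ℕ) × (Fin (r + 1) → ℕ)) :
    blocks p = (p.1 0, p.2 0) :: blocks (Fin.tail p.1, Fin.tail p.2) :=
  List.ofFn_succ

section BlockSums

variable {M : Type*} [Semiring M] (L0 L1 : ℕ → M)

def blockSum (c r u v : ℕ) : M :=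
  ∑ p ∈ blockTuples r u v, blocksOp L0 L1 c (blocks p)

theorem sum_blockTuples_filter_fst_ne_zero (c r u v : ℕ) :
    ∑ p ∈ (blockTuples (r + 1) (u + 1) v).filter (fun p => p.1 0 ≠ 0),
        blocksOp L0 L1 c (blocks p) =
      L0 c * blockSum L0 L1 (c - 2) (r + 1) u v := by
  rw [blockSum, Finset.mul_sum]
  refine Finset.sum_nbij' (fun p => (Function.update p.1 0 (p.1 0 - 1), p.2))
    (fun q => (Function.update q.1 0 (q.1 0 + 1), q.2)) ?_ ?_ ?_ ?_ ?_
  · intro p hp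
    simp only [Finset.mem_filter, mem_blockTuples_succ, ne_eq, Function.update_self,
      Fin.succ_ne_zero, not_false_eq_true, Function.update_of_ne] at hp ⊢
    exact ⟨by omega, hp.1.2⟩
  · intro q hq
    simp only [Finset.mem_filter, mem_blockTuples_succ, ne_eq, Function.update_self,
      Fin.succ_ne_zero, not_false_eq_true, Function.update_of_ne,
      Nat.add_eq_zero_iff, one_ne_zero, and_false, and_true] at hq ⊢
    exact ⟨by omega, hq.2⟩
  · intro p hp
    simp only [Finset.mem_filter] at hp
    simp [Nat.sub_add_cancel (Nat.one_le_iff_ne_zero.mpr hp.2)]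
  · intro q hq
    simp
  · intro p hp
    rw [Finset.mem_filter] at hp
    obtain ⟨t, ht⟩ := Nat.exists_eq_add_one.mpr (Nat.one_le_iff_ne_zero.mpr hp.2)
    rw [blocks_succ, blocks_succ]
    simp [ht, blocksOp, Fin.tail_update_zero]

theorem one_le_snd_zero_of_mem_blockTuples {r u v : ℕ}
    {p : (Fin (r + 1) → ℕ) × (Fin (r + 1) → ℕ)}
    (hp : p ∈ blockTuples (r + 1) u (v + 1)) : 1 ≤ p.2 0 := by
  rw [mem_blockTuples_succ] at hp
  rcases Nat.eq_zero_or_pos r with rfl | hr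
  · have hs := hp.2.1
    rw [Fin.sum_univ_zero, add_zero] at hs
    omega
  · exact hp.2.2.1 hr.ne'

theorem sum_blockTuples_filter_fst_eq_zero_of_snd_ge (c r u v : ℕ) :
    ∑ p ∈ (blockTuples (r + 1) u (v + 1)).filter
        (fun p => p.1 0 = 0 ∧ (r = 0 ∨ 2 ≤ p.2 0)),
        blocksOp L0 L1 c (blocks p) =
      L1 c * ∑ q ∈ (blockTuples (r + 1) u v).filter (fun q => q.1 0 = 0),
        blocksOp L0 L1 (c - 1) (blocks q) := by
  rw [Finset.mul_sum]
  refine Finset.sum_nbij' (fun p => (p.1, Function.update p.2 0 (p.2 0 - 1)))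
    (fun q => (q.1, Function.update q.2 0 (q.2 0 + 1))) ?_ ?_ ?_ ?_ ?_
  · intro p hp
    simp only [Finset.mem_filter] at hp
    have h1 := one_le_snd_zero_of_mem_blockTuples hp.1
    simp only [Finset.mem_filter, mem_blockTuples_succ, ne_eq, Function.update_self,
      Fin.succ_ne_zero, not_false_eq_true, Function.update_of_ne] at hp ⊢
    exact ⟨⟨hp.1.1, by omega, fun hr => by omega, hp.1.2.2.2⟩, hp.2.1⟩
  · intro q hq
    simp only [Finset.mem_filter, mem_blockTuples_succ, ne_eq, Function.update_self,
      Fin.succ_ne_zero, not_false_eq_true, Function.update_of_ne,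
      le_add_iff_nonneg_left, zero_le, implies_true, true_and, Nat.reduceLeDiff] at hq ⊢
    exact ⟨⟨hq.1.1, by omega, hq.1.2.2.2⟩, hq.2, (em (r = 0)).imp_right hq.1.2.2.1⟩
  · intro p hp
    simp only [Finset.mem_filter] at hp
    simp [Nat.sub_add_cancel (one_le_snd_zero_of_mem_blockTuples hp.1)]
  · intro q hq
    simp
  · intro p hp
    simp only [Finset.mem_filter] at hp
    obtain ⟨s, hs⟩ := Nat.exists_eq_add_one.mpr (one_le_snd_zero_of_mem_blockTuples hp.1)
    rw [blocks_succ, blocks_succ]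
    simp [hp.2.1, hs, blocksOp, Fin.tail_update_zero]

theorem sum_blockTuples_filter_fst_eq_zero_snd_eq_one (c r u v : ℕ) :
    ∑ p ∈ (blockTuples (r + 2) u (v + 1)).filter (fun p => p.1 0 = 0 ∧ p.2 0 = 1),
        blocksOp L0 L1 c (blocks p) =
      L1 c * ∑ q ∈ (blockTuples (r + 1) u v).filter (fun q => q.1 0 ≠ 0),
        blocksOp L0 L1 (c - 1) (blocks q) := by
  rw [Finset.mul_sum]
  refine Finset.sum_nbij' (fun p => (Fin.tail p.1, Fin.tail p.2))
    (fun q => (Fin.cons 0 q.1, Fin.cons 1 q.2)) ?_ ?_ ?_ ?_ ?_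
  · intro p hp
    rw [Finset.mem_filter, mem_blockTuples_succ] at hp
    simp only [Finset.mem_filter, mem_blockTuples, Fin.tail, ne_eq, Fin.val_eq_zero_iff,
      Fin.succ_zero_eq_one, Nat.add_right_cancel_iff, Nat.add_eq_zero_iff, one_ne_zero, and_false,
      not_false_eq_true, forall_const] at hp ⊢
    obtain ⟨⟨hu, hv, -, hj⟩, h0, h1⟩ := hp
    have hτ1 : 1 ≤ p.1 1 := (hj 0).1
    exact ⟨⟨by omega, by omega, fun i => ⟨fun _ => (hj i).1, (hj i).2⟩⟩, by omega⟩
  · intro q hq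
    rw [Finset.mem_filter, mem_blockTuples] at hq
    rw [Finset.mem_filter, mem_blockTuples_succ]
    simp only [Fin.cons_zero, Fin.cons_succ, zero_add, ne_eq, Nat.add_eq_zero_iff, one_ne_zero,
      and_false, not_false_eq_true, le_refl, imp_self, Nat.add_right_cancel_iff, true_and, and_self,
      and_true]
    obtain ⟨⟨hu, hv, hi⟩, h0⟩ := hq
    refine ⟨hu, by omega, fun j => ⟨?_, fun hj => (hi j).2 (by omega)⟩⟩
    rcases eq_or_ne (j : ℕ) 0 with hj | hj
    · rw [show j = 0 from Fin.ext hj]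
      omega
    · exact (hi j).1 hj
  · intro p hp
    simp only [Finset.mem_filter] at hp
    simp only [← hp.2.1, ← hp.2.2, Fin.cons_self_tail]
  · intro q hq
    simp
  · intro p hp
    simp only [Finset.mem_filter] at hp
    rw [blocks_succ]
    simp [hp.2.1, hp.2.2, blocksOp]

theorem blockTuples_succ_eq_empty {r u v : ℕ} (h : u < r ∨ v < r) :
    blockTuples (r + 1) u v = ∅ := by
  refine Finset.eq_empty_of_forall_notMem fun p hp => ?_
  obtain ⟨hu, hv, hp⟩ := mem_blockTuples.mp hp
  have hτ : r ≤ ∑ j : Fin r, p.1 j.succ := by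
    simpa using Finset.sum_le_sum (s := (Finset.univ : Finset (Fin r)))
      fun j _ => (hp j.succ).1 (by simp)
  have hs : r ≤ ∑ j : Fin r, p.2 j.castSucc := by
    simpa using Finset.sum_le_sum (s := (Finset.univ : Finset (Fin r)))
      fun j _ => (hp j.castSucc).2 (by simp [j.isLt.ne])
  rw [Fin.sum_univ_succ] at hu
  rw [Fin.sum_univ_castSucc] at hv
  omega

theorem filter_fst_ne_zero_blockTuples_zero_left (r v : ℕ) :
    (blockTuples (r + 1) 0 v).filter (fun p => p.1 0 ≠ 0) = ∅ := by
  refine Finset.filter_false_of_mem fun p hp => ?_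
  rw [mem_blockTuples_succ] at hp
  omega

theorem filter_fst_eq_zero_blockTuples_zero_right {u : ℕ} (hu : u ≠ 0) (r : ℕ) :
    (blockTuples (r + 1) u 0).filter (fun p => p.1 0 = 0) = ∅ := by
  refine Finset.filter_false_of_mem fun p hp hp0 => ?_
  rw [mem_blockTuples_succ] at hp
  obtain ⟨hτ, hs, hs0, -⟩ := hp
  obtain rfl : r = 0 := by by_contra hr; have := hs0 hr; omega
  rw [Fin.sum_univ_zero, add_zero] at hτ
  omega

theorem sum_range_sum_filter_fst_eq_zero (c u v N : ℕ) (hN : v < N) :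
    ∑ r ∈ Finset.range (N + 1),
        ∑ p ∈ (blockTuples (r + 1) u (v + 1)).filter (fun p => p.1 0 = 0),
          blocksOp L0 L1 c (blocks p) =
      L1 c * ∑ r ∈ Finset.range (N + 1), blockSum L0 L1 (c - 1) (r + 1) u v := by
  set F0 : ℕ → M := fun r => ∑ q ∈ (blockTuples (r + 1) u v).filter (fun q => q.1 0 = 0),
    blocksOp L0 L1 (c - 1) (blocks q)
  set F1 : ℕ → M := fun r => ∑ q ∈ (blockTuples (r + 1) u v).filter (fun q => q.1 0 ≠ 0),
    blocksOp L0 L1 (c - 1) (blocks q)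
  have hsplit (r : ℕ) :
      ∑ p ∈ (blockTuples (r + 1) u (v + 1)).filter (fun p => p.1 0 = 0),
          blocksOp L0 L1 c (blocks p) =
        L1 c * F0 r + ∑ p ∈ (blockTuples (r + 1) u (v + 1)).filter
          (fun p => p.1 0 = 0 ∧ ¬(r = 0 ∨ 2 ≤ p.2 0)), blocksOp L0 L1 c (blocks p) := by
    rw [← sum_blockTuples_filter_fst_eq_zero_of_snd_ge, ← Finset.filter_filter,
      ← Finset.filter_filter, Finset.sum_filter_add_sum_filter_not]
  have hdrop (r : ℕ) :
      ∑ p ∈ (blockTuples (r + 1 + 1) u (v + 1)).filter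
          (fun p => p.1 0 = 0 ∧ ¬(r + 1 = 0 ∨ 2 ≤ p.2 0)),
        blocksOp L0 L1 c (blocks p) = L1 c * F1 r := by
    rw [← sum_blockTuples_filter_fst_eq_zero_snd_eq_one]
    refine Finset.sum_congr (Finset.filter_congr fun p hp => ?_) fun _ _ => rfl
    have := one_le_snd_zero_of_mem_blockTuples hp
    omega
  have hF1 : F1 N = 0 := by
    simp [F1, blockTuples_succ_eq_empty (Or.inr hN)]
  calc _ = L1 c * ∑ r ∈ Finset.range (N + 1), F0 r + L1 c * ∑ r ∈ Finset.range N, F1 r := by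
        rw [Finset.sum_congr rfl fun r _ => hsplit r, Finset.sum_add_distrib, Finset.mul_sum,
          Finset.sum_range_succ' (fun r => ∑ p ∈ _, _)]
        simp only [hdrop, Finset.mul_sum]
        simp
    _ = L1 c * ∑ r ∈ Finset.range (N + 1), (F0 r + F1 r) := by
        rw [Finset.sum_add_distrib, Finset.sum_range_succ F1, hF1, add_zero, mul_add]
    _ = _ := by
        simp only [F0, F1, blockSum, Finset.sum_filter_add_sum_filter_not]

end BlockSums

section Curly

variable {F V : Type*} [Field F] [AddCommGroup V] [Module F V] (L0 L1 : ℕ → Module.End F V)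

theorem orderedOp_eq_blocksOp (q u v r : ℕ) (τ s : Fin r → ℕ) :
    orderedOp L0 L1 q u v r τ s =
      blocksOp L0 L1 (2 * u + v - q) (List.ofFn fun i => (τ i, s i)) := by
  rw [orderedOp, prod_blocks_eq_blocksOp]
  congr 1
  refine List.ext_getElem (by simp) fun i hi _ => ?_
  have hir : i < r := by simpa using hi
  simp [hir]

theorem curly_eq_sum_range (q u v N : ℕ) (hN : min u v < N) :
    curly L0 L1 q u v = ∑ r ∈ Finset.range N, blockSum L0 L1 (2 * u + v - q) (r + 1) u v := by
  have hfinsum (r : ℕ) : ∑ᶠ p ∈ Sset r u v, orderedOp L0 L1 q u v r p.1 p.2 =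
      blockSum L0 L1 (2 * u + v - q) r u v := by
    rw [← coe_blockTuples, finsum_mem_coe_finset]
    simp only [orderedOp_eq_blocksOp, blockSum, blocks]
  rw [curly, ← Finset.Ico_add_one_right_eq_Icc, Finset.sum_Ico_eq_sum_range, Nat.add_sub_cancel]
  simp only [hfinsum, add_comm 1]
  refine Finset.sum_subset (Finset.range_subset_range.mpr hN) fun r _ hr => ?_
  rw [Finset.mem_range, not_lt] at hr
  rw [blockSum, blockTuples_succ_eq_empty (by omega), Finset.sum_empty]

theorem curly_eq_add (q u v : ℕ) (h : u ≠ 0 ∨ v ≠ 0) :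
    curly L0 L1 q u v =
      (if u = 0 then 0 else L0 (2 * u + v - q) * curly L0 L1 q (u - 1) v) +
      (if v = 0 then 0 else L1 (2 * u + v - q) * curly L0 L1 q u (v - 1)) := by
  rw [curly_eq_sum_range L0 L1 q u v (u + v + 1) (by omega)]
  have hsplit (c r : ℕ) : blockSum L0 L1 c (r + 1) u v =
      ∑ p ∈ (blockTuples (r + 1) u v).filter (fun p => p.1 0 ≠ 0),
        blocksOp L0 L1 c (blocks p) +
      ∑ p ∈ (blockTuples (r + 1) u v).filter (fun p => p.1 0 = 0),
        blocksOp L0 L1 c (blocks p) :=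
    (Finset.sum_filter_not_add_sum_filter _ _ _).symm
  rw [Finset.sum_congr rfl fun r _ => hsplit _ r, Finset.sum_add_distrib]
  congr 1
  · rcases u with _ | u
    · simp [filter_fst_ne_zero_blockTuples_zero_left]
    · simp only [sum_blockTuples_filter_fst_ne_zero, ← Finset.mul_sum]
      rw [if_neg u.succ_ne_zero, Nat.add_sub_cancel,
        curly_eq_sum_range L0 L1 q u v (u + 1 + v + 1) (by omega),
        show 2 * (u + 1) + v - q - 2 = 2 * u + v - q by omega]
  · rcases v with _ | v
    · have hu : u ≠ 0 := by simpa using h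
      simp [filter_fst_eq_zero_blockTuples_zero_right hu]
    · rw [if_neg v.succ_ne_zero, show u + (v + 1) + 1 = u + v + 1 + 1 by omega,
        sum_range_sum_filter_fst_eq_zero _ _ _ _ _ _ (by omega), Nat.add_sub_cancel,
        curly_eq_sum_range L0 L1 q u v (u + v + 1 + 1) (by omega),
        show 2 * u + (v + 1) - q - 1 = 2 * u + v - q by omega]

theorem curly_zero_zero (q : ℕ) : curly L0 L1 q 0 0 = 1 := by
  have h : blockTuples 1 0 0 = {(0, 0)} := by
    refine Finset.eq_singleton_iff_unique_mem.mpr ⟨by simp [mem_blockTuples], fun p hp => ?_⟩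
    simp only [mem_blockTuples, Fin.sum_univ_one] at hp
    ext i <;> simp [Subsingleton.elim i 0, hp.1, hp.2.1]
  rw [curly_eq_sum_range L0 L1 q 0 0 1 (by simp), Finset.sum_range_one, blockSum, h]
  simp [blocks, blocksOp]

noncomputable def curlyDiag (q n : ℕ) : Module.End F V :=
  ∑ t ∈ Finset.range (n / 2 + 1), curly L0 L1 q t (n - 2 * t)

theorem curlyDiag_add_two (q m : ℕ) :
    curlyDiag L0 L1 q (m + 2) =
      L0 (m + 2 - q) * curlyDiag L0 L1 q m + L1 (m + 2 - q) * curlyDiag L0 L1 q (m + 1) := by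
  have hterm : ∀ t ∈ Finset.range ((m + 2) / 2 + 1), curly L0 L1 q t (m + 2 - 2 * t) =
      (if t = 0 then 0 else L0 (m + 2 - q) * curly L0 L1 q (t - 1) (m + 2 - 2 * t)) +
      (if m + 2 - 2 * t = 0 then 0 else L1 (m + 2 - q) * curly L0 L1 q t (m + 1 - 2 * t)) := by
    intro t ht
    rw [Finset.mem_range] at ht
    rw [curly_eq_add _ _ _ _ _ (by omega), show 2 * t + (m + 2 - 2 * t) = m + 2 by omega,
      show m + 2 - 2 * t - 1 = m + 1 - 2 * t by omega]
  rw [curlyDiag, Finset.sum_congr rfl hterm, Finset.sum_add_distrib]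
  congr 1
  · rw [show (m + 2) / 2 + 1 = m / 2 + 1 + 1 by omega, Finset.sum_range_succ', curlyDiag,
      Finset.mul_sum]
    simp [show ∀ t, m + 2 - 2 * (t + 1) = m - 2 * t from fun t => by omega]
  · rw [curlyDiag, Finset.mul_sum]
    symm
    refine Finset.sum_subset_zero_on_sdiff (Finset.range_subset_range.mpr (by omega)) ?_ ?_
    · intro t ht
      simp only [Finset.mem_sdiff, Finset.mem_range] at ht
      rw [if_pos (by omega)]
    · intro t ht
      rw [Finset.mem_range] at ht
      rw [if_neg (by omega)]

end Curly

/-- If `Y_{n+2} = L0(n) Y_n + L1(n) Y_{n+1}` with `Y_0 = 0`, `Y_1 = B`, then for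
every `n ≥ 1`, `Y_n = Σ_{t=0}^{⌊(n−1)/2⌋} {L0^(t) L1^(n−1−2t)}_1 B`. -/
theorem operator_difference_solution_I
    {F V : Type*} [Field F] [AddCommGroup V] [Module F V]
    (L0 L1 : ℕ → Module.End F V) (Y : ℕ → V) (B : V)
    (hrec : ∀ n : ℕ, Y (n + 2) = L0 n (Y n) + L1 n (Y (n + 1)))
    (h0 : Y 0 = 0) (h1 : Y 1 = B) :
    ∀ n : ℕ, 1 ≤ n →
      Y n = ∑ t ∈ Finset.range ((n - 1) / 2 + 1),
        (curly L0 L1 1 t (n - 1 - 2 * t)) B := by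
  have hY (n : ℕ) :
      Y (n + 1) = curlyDiag L0 L1 1 n B ∧ Y (n + 2) = curlyDiag L0 L1 1 (n + 1) B := by
    induction n with
    | zero =>
      have hdiag1 : curlyDiag L0 L1 1 1 = L1 0 := by
        simp [curlyDiag, curly_eq_add L0 L1 1 0 1 (by simp), curly_zero_zero]
      refine ⟨by simp [curlyDiag, curly_zero_zero, h1], ?_⟩
      rw [hrec, hdiag1, h0, h1, map_zero, zero_add]
    | succ n ih =>
      refine ⟨ih.2, ?_⟩
      rw [hrec, ih.1, ih.2, curlyDiag_add_two]
      simp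
  intro n hn
  obtain ⟨k, rfl⟩ := Nat.exists_eq_add_of_le' hn
  rw [(hY k).1, curlyDiag, LinearMap.sum_apply, Nat.add_sub_cancel]
end

section
/- Let k ≥ 1, N = 2k, and suppose |c_i| = ρ for all i, for some real ρ ≥ 0. Define L0(n) = M₊ for n even and L0(n) = M₋ for n odd, and L1(n) = M₋ for n even and L1(n) = M₊ for n odd. Then for every n ≥ 4, the ordered product L0(n−2) ∘ L1(n−4) ∘ L1(n−5) ∘ ⋯ ∘ L1(1) ∘ L1(0) (with L1(0) applied first and L0(n−2) applied last) equals ρ^{n−4} D₊ if n is even, and ρ^{n−3} M₋ if n is odd. -/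
/-- `M₊` sends `e_{N−i+1} ↦ c_i e_i` for `1 ≤ i ≤ k` and `e_j ↦ 0` for
`1 ≤ j ≤ k` (here `N = 2k`; matrix with respect to the standard basis,
0-indexed). -/
noncomputable def Mplus (k : ℕ) (c : Fin k → ℂ) :
    Matrix (Fin (2 * k)) (Fin (2 * k)) ℂ := fun a b =>
  if h : (a : ℕ) < k ∧ (a : ℕ) + (b : ℕ) = 2 * k - 1 then c ⟨a, h.1⟩ else 0

/-- `M₋ = M₊†` sends `e_i ↦ conj(c_i) e_{N−i+1}` for `1 ≤ i ≤ k` and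
`e_j ↦ 0` for `k < j ≤ N`. -/
noncomputable def Mminus (k : ℕ) (c : Fin k → ℂ) :
    Matrix (Fin (2 * k)) (Fin (2 * k)) ℂ := fun a b =>
  if h : (b : ℕ) < k ∧ (a : ℕ) + (b : ℕ) = 2 * k - 1 then
    starRingEnd ℂ (c ⟨b, h.1⟩) else 0

/-- `D₊` sends `e_i ↦ |c_i|² e_i` for `1 ≤ i ≤ k` and `e_j ↦ 0` for
`k < j ≤ N`. -/
noncomputable def Dplus (k : ℕ) (c : Fin k → ℂ) :
    Matrix (Fin (2 * k)) (Fin (2 * k)) ℂ := fun a b =>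
  if h : a = b ∧ (a : ℕ) < k then ((‖c ⟨a, h.2⟩‖) ^ 2 : ℂ) else 0

/-- `D₋` sends `e_j ↦ |c_{N−j+1}|² e_j` for `k < j ≤ N` and `e_i ↦ 0` for
`1 ≤ i ≤ k`. -/
noncomputable def Dminus (k : ℕ) (c : Fin k → ℂ) :
    Matrix (Fin (2 * k)) (Fin (2 * k)) ℂ := fun a b =>
  if h : a = b ∧ k ≤ (a : ℕ) then
    ((‖c ⟨2 * k - 1 - (a : ℕ), by have := a.isLt; omega⟩‖) ^ 2 : ℂ)
  else 0

/-- `L0(n) = M₊` for `n` even, `M₋` for `n` odd. -/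
noncomputable def Lzero (k : ℕ) (c : Fin k → ℂ) (n : ℕ) :
    Matrix (Fin (2 * k)) (Fin (2 * k)) ℂ :=
  if Even n then Mplus k c else Mminus k c

/-- `L1(n) = M₋` for `n` even, `M₊` for `n` odd. -/
noncomputable def Lone (k : ℕ) (c : Fin k → ℂ) (n : ℕ) :
    Matrix (Fin (2 * k)) (Fin (2 * k)) ℂ :=
  if Even n then Mminus k c else Mplus k c


/-!
Since `L0(m + 1) = L1(m)`, the product is the descending product `L1(n - 3) ⋯ L1(0)`, an
alternating word `⋯ M₊ M₋ M₊ M₋`. Pairing letters from the right, `M₊ M₋ = D₊`, and when all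
`|c_i| = ρ` the diagonal `D₊` is `ρ²` on the range of `M₋`, i.e. `M₋ D₊ = ρ² M₋`.
-/

lemma Mplus_mul_Mminus (k : ℕ) (c : Fin k → ℂ) :
    Mplus k c * Mminus k c = Dplus k c := by
  ext a b
  rw [Matrix.mul_apply]
  unfold Mplus Mminus Dplus
  by_cases ha : (a : ℕ) < k
  · have hx : 2 * k - 1 - (a : ℕ) < 2 * k := by omega
    rw [Finset.sum_eq_single (⟨2 * k - 1 - (a : ℕ), hx⟩ : Fin (2 * k))]
    · rw [dif_pos ⟨ha, by dsimp only; omega⟩]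
      by_cases hab : a = b
      · subst hab
        rw [dif_pos ⟨ha, by dsimp only; omega⟩, dif_pos ⟨rfl, ha⟩, Complex.mul_conj,
          Complex.normSq_eq_norm_sq]
        norm_cast
      · rw [dif_neg, dif_neg fun h => hab h.1, mul_zero]
        rintro ⟨-, h⟩
        exact hab (Fin.ext (by rw [Fin.val_mk] at h; omega))
    · intro x _ hne
      rw [dif_neg, zero_mul]
      rintro ⟨-, h⟩
      exact hne (Fin.ext (by dsimp only; omega))
    · simp
  · rw [dif_neg fun h => ha h.2]
    exact Finset.sum_eq_zero fun x _ => by rw [dif_neg fun h => ha h.1, zero_mul]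

lemma Mminus_mul_Dplus (k : ℕ) (c : Fin k → ℂ) (ρ : ℝ) (hc : ∀ i, ‖c i‖ = ρ) :
    Mminus k c * Dplus k c = ((ρ ^ 2 : ℝ) : ℂ) • Mminus k c := by
  ext a b
  rw [Matrix.mul_apply, Matrix.smul_apply]
  unfold Mminus Dplus
  rw [Finset.sum_eq_single b (fun x _ hne => mul_eq_zero_of_right _ (dif_neg fun h => hne h.1))
    (by simp)]
  by_cases hab : (b : ℕ) < k ∧ (a : ℕ) + (b : ℕ) = 2 * k - 1
  · rw [dif_pos hab, dif_pos ⟨rfl, hab.1⟩, hc, smul_eq_mul]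
    push_cast
    ring
  · rw [dif_neg hab, zero_mul, smul_zero]

lemma Lone_two_mul (k : ℕ) (c : Fin k → ℂ) (m : ℕ) : Lone k c (2 * m) = Mminus k c := by
  simp [Lone]

lemma Lone_two_mul_add_one (k : ℕ) (c : Fin k → ℂ) (m : ℕ) :
    Lone k c (2 * m + 1) = Mplus k c := by
  simp [Lone]

lemma Lzero_succ (k : ℕ) (c : Fin k → ℂ) (m : ℕ) : Lzero k c (m + 1) = Lone k c m := by
  simp only [Lzero, Lone, Nat.even_add_one, ite_not]

noncomputable def loneDescProd (k : ℕ) (c : Fin k → ℂ) (m : ℕ) :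
    Matrix (Fin (2 * k)) (Fin (2 * k)) ℂ :=
  ((List.range m).map fun j => Lone k c (m - 1 - j)).prod

lemma loneDescProd_succ (k : ℕ) (c : Fin k → ℂ) (m : ℕ) :
    loneDescProd k c (m + 1) = Lone k c m * loneDescProd k c m := by
  simp only [loneDescProd, List.range_succ_eq_map, List.map_cons, List.map_map,
    List.prod_cons, Nat.add_sub_cancel, Nat.sub_zero]
  congr 3
  funext j
  simp only [Function.comp_apply]
  congr 1
  omega

section

variable (k : ℕ) (c : Fin k → ℂ) (ρ : ℝ) (hc : ∀ i, ‖c i‖ = ρ)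
include hc

lemma loneDescProd_odd (m : ℕ) :
    loneDescProd k c (2 * m + 1) = ((ρ ^ (2 * m) : ℝ) : ℂ) • Mminus k c := by
  induction m with
  | zero => simp [loneDescProd, Lone]
  | succ m ih =>
    rw [loneDescProd_succ, Lone_two_mul, show 2 * (m + 1) = 2 * m + 1 + 1 by ring,
      loneDescProd_succ, ih, Lone_two_mul_add_one, Matrix.mul_smul, Matrix.mul_smul,
      Mplus_mul_Mminus, Mminus_mul_Dplus k c ρ hc, smul_smul, ← Complex.ofReal_mul, ← pow_add]

lemma loneDescProd_even (m : ℕ) :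
    loneDescProd k c (2 * m + 2) = ((ρ ^ (2 * m) : ℝ) : ℂ) • Dplus k c := by
  rw [loneDescProd_succ, loneDescProd_odd k c ρ hc, Matrix.mul_smul,
    Lone_two_mul_add_one, Mplus_mul_Mminus]

end

theorem Lzero_descending_Lone_product_general (k : ℕ) (c : Fin k → ℂ)
    (ρ : ℝ) (hc : ∀ i, ‖c i‖ = ρ)
    (n : ℕ) (hn : 4 ≤ n) :
    (Even n →
      Lzero k c (n - 2) *
        ((List.range (n - 3)).map (fun j => Lone k c (n - 4 - j))).prod
        = ((ρ ^ (n - 4) : ℝ) : ℂ) • Dplus k c) ∧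
    (Odd n →
      Lzero k c (n - 2) *
        ((List.range (n - 3)).map (fun j => Lone k c (n - 4 - j))).prod
        = ((ρ ^ (n - 3) : ℝ) : ℂ) • Mminus k c) := by
  have hprod : Lzero k c (n - 2) *
      ((List.range (n - 3)).map (fun j => Lone k c (n - 4 - j))).prod
      = loneDescProd k c (n - 2) := by
    obtain ⟨j, rfl⟩ : ∃ j, n = j + 3 := ⟨n - 3, by omega⟩
    rw [show j + 3 - 2 = j + 1 from rfl, loneDescProd_succ, ← Lzero_succ]
    -- `j + 3 - 4 - i` and `j - 1 - i` agree definitionally, also for `j = 0`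
    rfl
  rw [hprod]
  refine ⟨fun hn_even => ?_, fun hn_odd => ?_⟩
  · obtain ⟨m, rfl⟩ : ∃ m, n = 2 * m + 4 := ⟨n / 2 - 2, by rcases hn_even with ⟨r, hr⟩; omega⟩
    exact loneDescProd_even k c ρ hc m
  · obtain ⟨m, rfl⟩ : ∃ m, n = 2 * m + 5 := ⟨n / 2 - 2, by rcases hn_odd with ⟨r, hr⟩; omega⟩
    exact loneDescProd_odd k c ρ hc (m + 1)

/-- If `|c_i| = ρ` for all `i`, then for every `n ≥ 4` the ordered product
`L0(n−2) ∘ L1(n−4) ∘ L1(n−5) ∘ ⋯ ∘ L1(1) ∘ L1(0)` (with `L1(0)` applied first)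
equals `ρ^{n−4} D₊` if `n` is even and `ρ^{n−3} M₋` if `n` is odd. -/
theorem Lzero_descending_Lone_product (k : ℕ) (hk : 1 ≤ k) (c : Fin k → ℂ)
    (ρ : ℝ) (hρ : 0 ≤ ρ) (hc : ∀ i, ‖c i‖ = ρ)
    (n : ℕ) (hn : 4 ≤ n) :
    (Even n →
      Lzero k c (n - 2) *
        ((List.range (n - 3)).map (fun j => Lone k c (n - 4 - j))).prod
        = ((ρ ^ (n - 4) : ℝ) : ℂ) • Dplus k c) ∧
    (Odd n →
      Lzero k c (n - 2) *
        ((List.range (n - 3)).map (fun j => Lone k c (n - 4 - j))).prod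
        = ((ρ ^ (n - 3) : ℝ) : ℂ) • Mminus k c) :=
  Lzero_descending_Lone_product_general k c ρ hc n hn
end
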